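/- arXiv:2111.13240 — 3 statements merged into one kernel-verified Lean document; each statement's English description precedes it below -/
import Mathlib

section
/- There is an absolute constant C such that for every directed path P on m ≥ 2 vertices, there exists a set H of at most C · m · log m edges from the transitive closure of P such that dist_{P∪H}(u,v) ≤ 2 for every pair of vertices u, v of P with v reachable from u along P. -/
/-!
Every pair `u < v` of `{0, …, m-1}` has a hub `h ∈ [u, v]` divisible by `2^j`, where `2^j` is
the largest power of two having a multiple in `[u, v]`; then `v - u < 2^(j+1)`, since otherwise
`[u, v]` would contain a multiple of `2^(j+1)`. So it suffices to add every edge `(a, b)` with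
`b - a < 2^(j+1)` and `2^j` dividing `a` or `b`. At each of the `log₂ m + 1` levels `j` there are
at most `m / 2^j + 1` possible anchors and `2^(j+1)` lengths on each side of an anchor, i.e.
`O(m)` edges per level and `O(m log m)` in total. -/

namespace Paper

variable {V : Type*}

/-- `IsWalk E u v l` : `l` is the list of vertices visited after `u` on a
directed walk from `u` to `v` in the digraph with edge relation `E`.
The number of edges of the walk is `l.length`. -/
def IsWalk (E : V → V → Prop) : V → V → List V → Prop
  | u, v, [] => u = v
  | u, v, x :: xs => E u x ∧ IsWalk E x v xs

/-- `v` is reachable from `u` by a directed walk (possibly trivial). -/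
def Reach (E : V → V → Prop) (u v : V) : Prop := ∃ l, IsWalk E u v l

/-- The transitive closure `G*`: pairs `(u,v)` with `u ≠ v` and `v` reachable from `u`. -/
def TC (E : V → V → Prop) (u v : V) : Prop := u ≠ v ∧ Reach E u v

/-- `dist E u v` : minimum number of edges on a directed walk from `u` to `v`. -/
noncomputable def dist (E : V → V → Prop) (u v : V) : ℕ :=
  sInf {k | ∃ l, IsWalk E u v l ∧ l.length = k}

/-- The digraph `G ∪ H` obtained by adding the edge set `H` to `E`. -/
def addE (E : V → V → Prop) (H : Finset (V × V)) : V → V → Prop :=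
  fun a b => E a b ∨ (a, b) ∈ H

theorem dist_le_of_isWalk {E : V → V → Prop} {u v : V} {l : List V} (h : IsWalk E u v l) :
    dist E u v ≤ l.length :=
  Nat.sInf_le ⟨l, h, rfl⟩

theorem dist_le_two_of_reflGen {E : V → V → Prop} {u h v : V}
    (huh : Relation.ReflGen E u h) (hhv : Relation.ReflGen E h v) : dist E u v ≤ 2 := by
  cases huh with
  | refl => cases hhv with
    | refl => exact (dist_le_of_isWalk (l := []) rfl).trans (by norm_num)
    | single hhv => exact (dist_le_of_isWalk (l := [v]) ⟨hhv, rfl⟩).trans (by norm_num)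
  | single huh => cases hhv with
    | refl => exact (dist_le_of_isWalk (l := [h]) ⟨huh, rfl⟩).trans (by norm_num)
    | single hhv => exact dist_le_of_isWalk (l := [h, v]) ⟨huh, hhv, rfl⟩

theorem exists_dvd_of_add_le {d u v : ℕ} (hd : 0 < d) (huv : u + d ≤ v + 1) :
    ∃ h, u ≤ h ∧ h ≤ v ∧ d ∣ h := by
  refine ⟨(u + d - 1) / d * d, ?_, ?_, Nat.dvd_mul_left d _⟩ <;>
  · have := Nat.div_add_mod (u + d - 1) d
    have := Nat.mod_lt (u + d - 1) hd
    rw [mul_comm]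
    omega

theorem exists_dyadic_hub {u v L : ℕ} (huv : u < v) (hv : v < 2 ^ L) :
    ∃ j < L, ∃ h, u ≤ h ∧ h ≤ v ∧ 2 ^ j ∣ h ∧ v - u < 2 ^ (j + 1) := by
  classical
  have hL : 0 < L := Nat.pos_of_ne_zero fun hL => by rw [hL, pow_zero] at hv; omega
  set P : ℕ → Prop := fun j => ∃ h, u ≤ h ∧ h ≤ v ∧ 2 ^ j ∣ h
  set j := Nat.findGreatest P (L - 1)
  have hjL : j ≤ L - 1 := Nat.findGreatest_le _
  obtain ⟨h, huh, hhv, hdvd⟩ : P j :=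
    Nat.findGreatest_spec (Nat.zero_le _) ⟨u, le_rfl, huv.le, by simp⟩
  refine ⟨j, by omega, h, huh, hhv, hdvd, ?_⟩
  by_contra! hlong
  rcases hjL.lt_or_eq with hjL | hjL
  · exact Nat.findGreatest_is_greatest (lt_add_one j) hjL
      (exists_dvd_of_add_le (Nat.pow_pos two_pos) (by rw [pow_succ]; omega))
  · rw [hjL, Nat.sub_add_cancel hL] at hlong
    omega

def IsDyadicShortcut (j a b : ℕ) : Prop :=
  a < b ∧ b - a < 2 ^ (j + 1) ∧ (2 ^ j ∣ a ∨ 2 ^ j ∣ b)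

section Counting

open Finset
open scoped Classical

noncomputable def dyadicShortcuts (m L : ℕ) : Finset (Fin m × Fin m) :=
  {e | ∃ j < L, IsDyadicShortcut j e.1 e.2}

@[simp]
theorem mem_dyadicShortcuts {m L : ℕ} {e : Fin m × Fin m} :
    e ∈ dyadicShortcuts m L ↔ ∃ j < L, IsDyadicShortcut j e.1 e.2 := by
  simp [dyadicShortcuts]

noncomputable def anchoredShortcuts (m j : ℕ) (π : Fin m × Fin m → Fin m) :
    Finset (Fin m × Fin m) :=
  {e | e.1 < e.2 ∧ (e.2 : ℕ) - e.1 < 2 ^ (j + 1) ∧ 2 ^ j ∣ (π e : ℕ)}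

theorem card_anchoredShortcuts_le {m j : ℕ} (hj : 2 ^ j ≤ m) {π : Fin m × Fin m → Fin m}
    (hπ : π = Prod.fst ∨ π = Prod.snd) : #(anchoredShortcuts m j π) ≤ 4 * m := by
  have hinj := card_le_card_of_injOn (s := anchoredShortcuts m j π)
    (t := range (m / 2 ^ j + 1) ×ˢ range (2 ^ (j + 1)))
    (fun e => ((π e : ℕ) / 2 ^ j, (e.2 : ℕ) - e.1)) ?_ ?_
  · calc _ ≤ _ := hinj
      _ = (m / 2 ^ j * 2 ^ j) * 2 + 2 * 2 ^ j := by simp only [card_product, card_range]; ring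
      _ ≤ 4 * m := by have := Nat.div_mul_le_self m (2 ^ j); omega
  · intro e he
    simp only [anchoredShortcuts, coe_filter, mem_univ, true_and, Set.mem_ofPred_eq] at he
    simp only [coe_product, coe_range, Set.mem_prod, Set.mem_Iio]
    exact ⟨Nat.lt_succ_of_le (Nat.div_le_div_right (π e).isLt.le), he.2.1⟩
  · intro e he e' he' hee'
    simp only [anchoredShortcuts, coe_filter, mem_univ, true_and, Set.mem_ofPred_eq] at he he'
    simp only [Prod.mk.injEq, Nat.div_left_inj he.2.2 he'.2.2] at hee'
    rcases hπ with rfl | rfl <;> ext <;> omega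

theorem card_isDyadicShortcut_le {m j : ℕ} (hj : 2 ^ j ≤ m) :
    #{e : Fin m × Fin m | IsDyadicShortcut j e.1 e.2} ≤ 8 * m := by
  calc _ ≤ #(anchoredShortcuts m j Prod.fst ∪ anchoredShortcuts m j Prod.snd) := by
        gcongr
        intro e
        simp only [anchoredShortcuts, mem_union, mem_filter, mem_univ, true_and]
        unfold IsDyadicShortcut
        tauto
    _ ≤ 4 * m + 4 * m :=
        (card_union_le _ _).trans (add_le_add (card_anchoredShortcuts_le hj (.inl rfl))
          (card_anchoredShortcuts_le hj (.inr rfl)))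
    _ = 8 * m := by ring

theorem card_dyadicShortcuts_le {m L : ℕ} (hL : 2 ^ L ≤ 2 * m) :
    #(dyadicShortcuts m L) ≤ 8 * m * L := by
  calc _ ≤ #((range L).biUnion fun j => {e : Fin m × Fin m | IsDyadicShortcut j e.1 e.2}) := by
        gcongr
        intro e
        simp
    _ ≤ ∑ j ∈ range L, #{e : Fin m × Fin m | IsDyadicShortcut j e.1 e.2} := card_biUnion_le
    _ ≤ ∑ _j ∈ range L, 8 * m := by
        refine sum_le_sum fun j hj => card_isDyadicShortcut_le ?_
        have : 2 ^ (j + 1) ≤ 2 ^ L := Nat.pow_le_pow_right two_pos (mem_range.1 hj)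
        rw [pow_succ] at this
        omega
    _ = 8 * m * L := by simp [mul_comm]

theorem reflGen_addE_dyadicShortcuts {m L j : ℕ} (E : Fin m → Fin m → Prop) (hj : j < L)
    {a b : Fin m} (hab : (a : ℕ) ≤ b) (hlt : (b : ℕ) - a < 2 ^ (j + 1))
    (hdvd : 2 ^ j ∣ (a : ℕ) ∨ 2 ^ j ∣ (b : ℕ)) :
    Relation.ReflGen (addE E (dyadicShortcuts m L)) a b := by
  rcases hab.eq_or_lt with hab | hab
  · exact Fin.ext hab ▸ .refl
  · exact .single (Or.inr (mem_dyadicShortcuts.2 ⟨j, hj, hab, hlt, hdvd⟩))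

end Counting

theorem natLog_two_add_one_le {m : ℕ} (hm : 2 ≤ m) :
    ((Nat.log 2 m + 1 : ℕ) : ℝ) ≤ 3 * Real.log m := by
  have hlog2 : (2 : ℝ) / 3 < Real.log 2 := lt_trans (by norm_num) Real.log_two_gt_d9
  have hlogb : (Nat.log 2 m : ℝ) ≤ Real.log m / Real.log 2 := by
    simpa [Real.logb] using Real.natLog_le_logb m 2
  have hpos : (1 : ℝ) ≤ Nat.log 2 m := by exact_mod_cast Nat.log_pos one_lt_two hm
  have hlogm : 0 ≤ Real.log m := Real.log_nonneg (by exact_mod_cast (one_le_two.trans hm))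
  rw [le_div_iff₀ (by linarith)] at hlogb
  push_cast
  nlinarith

/-- There is an absolute constant `C` such that for every directed
path `P` on `m ≥ 2` vertices (vertices `0,…,m-1` with edges `i → i+1`), there is a set
`H` of at most `C · m · log m` edges from the transitive closure of `P` (pairs `(i,j)`
with `i < j`) such that `dist_{P∪H}(u,v) ≤ 2` whenever `u < v`. -/
theorem path_shortcut :
    ∃ C : ℝ, 0 < C ∧
      ∀ m : ℕ, 2 ≤ m →
        ∃ H : Finset (Fin m × Fin m),
          (∀ e ∈ H, (e.1 : ℕ) < (e.2 : ℕ)) ∧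
          (H.card : ℝ) ≤ C * (m : ℝ) * Real.log m ∧
          ∀ u v : Fin m, (u : ℕ) < (v : ℕ) →
            dist (fun a b : Fin m => ((a : ℕ) + 1 = (b : ℕ)) ∨ (a, b) ∈ H) u v ≤ 2 := by
  refine ⟨24, by norm_num, fun m hm => ⟨dyadicShortcuts m (Nat.log 2 m + 1), ?_, ?_, ?_⟩⟩
  · intro e he
    obtain ⟨j, -, hlt, -⟩ := mem_dyadicShortcuts.1 he
    exact hlt
  · have hL : 2 ^ (Nat.log 2 m + 1) ≤ 2 * m := by
      rw [pow_succ, mul_comm]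
      exact Nat.mul_le_mul_left 2 (Nat.pow_log_le_self 2 (by omega))
    calc _ ≤ ((8 * m * (Nat.log 2 m + 1) : ℕ) : ℝ) := mod_cast card_dyadicShortcuts_le hL
      _ ≤ 8 * m * (3 * Real.log m) := by
        push_cast
        gcongr
        exact_mod_cast natLog_two_add_one_le hm
      _ = 24 * m * Real.log m := by ring
  · intro u v huv
    obtain ⟨j, hj, h, huh, hhv, hdvd, hlt⟩ :=
      exists_dyadic_hub huv (v.isLt.trans (Nat.lt_pow_succ_log_self one_lt_two m))
    obtain ⟨hub, rfl⟩ : ∃ hub : Fin m, (hub : ℕ) = h := ⟨⟨h, by omega⟩, rfl⟩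
    exact dist_le_two_of_reflGen
      (reflGen_addE_dyadicShortcuts _ hj huh (by omega) (.inr hdvd))
      (reflGen_addE_dyadicShortcuts _ hj hhv (by omega) (.inl hdvd))

end Paper
end

section
/- For every directed acyclic graph G on n vertices and every integer ℓ with 1 ≤ ℓ ≤ n, there exist ℓ chains P_1, …, P_ℓ of G and at most ⌈2n/ℓ⌉ antichains Q_1, …, Q_b of G such that the union of the vertex sets of the chains together with the antichains covers all of V(G). -/
namespace Paper

variable {V : Type*}

/-- A digraph is acyclic (a DAG) if it has no nonempty closed walk. -/
def Acyclic (E : V → V → Prop) : Prop :=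
  ∀ (v : V) (l : List V), IsWalk E v v l → l = []

/-! ### Auxiliary lemmas -/

lemma isWalk_append {E : V → V → Prop} {v w : V} {l₂ : List V}
    (h2 : IsWalk E v w l₂) :
    ∀ {l₁ : List V} {u : V}, IsWalk E u v l₁ → IsWalk E u w (l₁ ++ l₂)
  | [], u, h1 => by subst h1; exact h2
  | x :: xs, u, h1 => ⟨h1.1, isWalk_append h2 h1.2⟩

lemma isWalk_chain {E : V → V → Prop} :
    ∀ {l : List V} {u v : V}, IsWalk E u v l → List.Chain E u l
  | [], _, _, _ => List.Chain.nil
  | _ :: _, _, _, h => List.Chain.cons h.1 (isWalk_chain h.2)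

lemma isWalk_split {E : V → V → Prop} :
    ∀ {l₁ : List V} {u v x : V} {l₂ : List V},
      IsWalk E u v (l₁ ++ x :: l₂) → IsWalk E u x (l₁ ++ [x])
  | [], _, _, _, _, h => ⟨h.1, rfl⟩
  | _ :: _, _, _, _, _, h => ⟨h.1, isWalk_split h.2⟩

lemma isWalk_mono {E E' : V → V → Prop} (h : ∀ a b, E' a b → E a b) :
    ∀ {l : List V} {u v : V}, IsWalk E' u v l → IsWalk E u v l
  | [], _, _, hw => hw
  | _ :: _, _, _, hw => ⟨h _ _ hw.1, isWalk_mono h hw.2⟩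

lemma isWalk_nodup {E : V → V → Prop} (hE : Acyclic E) :
    ∀ {l : List V} {u v : V}, IsWalk E u v l → (u :: l).Nodup := by
  intro l
  induction l with
  | nil => intro u v _; simp
  | cons a t ih =>
    intro u v h
    have h2 := ih h.2
    refine List.nodup_cons.2 ⟨?_, h2⟩
    intro hu
    obtain ⟨s, t', hst⟩ := List.append_of_mem hu
    have hw : IsWalk E u v (a :: t) := h
    rw [hst] at hw
    have h3 := isWalk_split hw
    have h4 := hE u (s ++ [u]) h3
    simp at h4

/-- Induced subgraph on a finite vertex set. -/
def ES {n : ℕ} (E : Fin n → Fin n → Prop) (S : Finset (Fin n)) :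
    Fin n → Fin n → Prop :=
  fun a b => E a b ∧ a ∈ S ∧ b ∈ S

/-- Height of `v` in the induced subgraph on `S` : length of a longest walk ending at `v`. -/
noncomputable def hgt {n : ℕ} (E : Fin n → Fin n → Prop) (S : Finset (Fin n))
    (v : Fin n) : ℕ :=
  sSup {k | ∃ u l, IsWalk (ES E S) u v l ∧ l.length = k}

lemma hset_nonempty {n : ℕ} {E : Fin n → Fin n → Prop} {S : Finset (Fin n)} {v : Fin n} :
    {k | ∃ u l, IsWalk (ES E S) u v l ∧ l.length = k}.Nonempty :=
  ⟨0, v, [], rfl, rfl⟩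

lemma hset_bdd {n : ℕ} {E : Fin n → Fin n → Prop} (hE : Acyclic E)
    {S : Finset (Fin n)} {v : Fin n} :
    BddAbove {k | ∃ u l, IsWalk (ES E S) u v l ∧ l.length = k} := by
  refine ⟨n, ?_⟩
  rintro k ⟨u, l, hw, rfl⟩
  have hn := isWalk_nodup hE (isWalk_mono (fun a b h => h.1) hw)
  have hc := hn.length_le_card
  simp at hc
  omega

lemma hgt_spec {n : ℕ} {E : Fin n → Fin n → Prop} (hE : Acyclic E)
    {S : Finset (Fin n)} {v : Fin n} :
    ∃ u l, IsWalk (ES E S) u v l ∧ l.length = hgt E S v :=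
  Nat.sSup_mem hset_nonempty (hset_bdd hE)

lemma hgt_lt {n : ℕ} {E : Fin n → Fin n → Prop} (hE : Acyclic E)
    {S : Finset (Fin n)} {u v : Fin n} (huv : ES E S u v) :
    hgt E S u < hgt E S v := by
  obtain ⟨w, l, hw, hl⟩ := hgt_spec hE (S := S) (v := u)
  have h2 : IsWalk (ES E S) u v [v] := ⟨huv, rfl⟩
  have h3 : IsWalk (ES E S) w v (l ++ [v]) := isWalk_append h2 hw
  have h4 : hgt E S u + 1 ≤ hgt E S v := by
    refine le_csSup (hset_bdd hE) ⟨w, l ++ [v], h3, ?_⟩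
    simp [hl]
  omega

lemma hgt_mono {n : ℕ} {E : Fin n → Fin n → Prop} (hE : Acyclic E)
    {R S : Finset (Fin n)} (hRS : R ⊆ S) (v : Fin n) :
    hgt E R v ≤ hgt E S v := by
  refine csSup_le_csSup (hset_bdd hE) hset_nonempty ?_
  rintro k ⟨u, l, hw, rfl⟩
  exact ⟨u, l, isWalk_mono (fun a b h => ⟨h.1, hRS h.2.1, hRS h.2.2⟩) hw, rfl⟩

lemma walk_mem_S {n : ℕ} {E : Fin n → Fin n → Prop} {S : Finset (Fin n)} :
    ∀ {l : List (Fin n)} {u v : Fin n},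
      IsWalk (ES E S) u v l → v ∈ S → ∀ x ∈ u :: l, x ∈ S := by
  intro l
  induction l with
  | nil =>
    intro u v h hv x hx
    simp at hx
    subst hx
    exact h ▸ hv
  | cons a t ih =>
    intro u v h hv x hx
    rcases List.mem_cons.1 hx with rfl | hx'
    · exact h.1.2.1
    · exact ih h.2 hv x hx'

lemma exists_chain {n : ℕ} {E : Fin n → Fin n → Prop} (hE : Acyclic E)
    {S : Finset (Fin n)} (hS : S.Nonempty) :
    ∃ c : List (Fin n), c.Nodup ∧ List.Chain' E c ∧ (∀ x ∈ c, x ∈ S) ∧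
      c.length = S.sup (hgt E S) + 1 := by
  obtain ⟨v, hv, hsup⟩ := Finset.exists_mem_eq_sup S hS (hgt E S)
  obtain ⟨u, l, hw, hl⟩ := hgt_spec hE (S := S) (v := v)
  refine ⟨u :: l, isWalk_nodup hE (isWalk_mono (fun a b h => h.1) hw), ?_,
    walk_mem_S hw hv, by simp [hl, hsup]⟩
  exact isWalk_chain (isWalk_mono (fun a b h => h.1) hw)

/-- Number of antichain levels needed to cover `R`. -/
noncomputable def B {n : ℕ} (E : Fin n → Fin n → Prop) (R : Finset (Fin n)) : ℕ :=
  if R.Nonempty then R.sup (hgt E R) + 1 else 0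

lemma aux {n : ℕ} {E : Fin n → Fin n → Prop} (hE : Acyclic E) :
    ∀ (ℓ : ℕ) (S : Finset (Fin n)),
      ∃ (P : Fin ℓ → List (Fin n)) (R : Finset (Fin n)),
        R ⊆ S ∧ (∀ i, (P i).Nodup ∧ List.Chain' E (P i)) ∧
        (∀ v ∈ S, (∃ i, v ∈ P i) ∨ v ∈ R) ∧ ℓ * B E R ≤ S.card := by
  intro ℓ
  induction ℓ with
  | zero =>
    intro S
    exact ⟨Fin.elim0, S, le_refl _, fun i => i.elim0, fun v hv => Or.inr hv, by simp⟩
  | succ ℓ ih =>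
    intro S
    rcases S.eq_empty_or_nonempty with rfl | hS
    · exact ⟨fun _ => [], ∅, le_refl _,
        fun _ => ⟨List.nodup_nil, List.isChain_nil⟩, by simp, by simp [B]⟩
    · obtain ⟨c, hcnd, hcch, hcS, hclen⟩ := exists_chain hE hS
      obtain ⟨P', R, hRS', hP', hcov', hcard'⟩ := ih (S \ c.toFinset)
      refine ⟨Fin.cons c P', R, hRS'.trans Finset.sdiff_subset, ?_, ?_, ?_⟩
      · intro i
        refine Fin.cases ?_ ?_ i
        · simpa using ⟨hcnd, hcch⟩
        · intro j; simpa using hP' j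
      · intro v hv
        by_cases hvc : v ∈ c
        · exact Or.inl ⟨0, by simpa using hvc⟩
        · rcases hcov' v (Finset.mem_sdiff.2 ⟨hv, by simpa using hvc⟩) with ⟨i, hi⟩ | hR
          · exact Or.inl ⟨i.succ, by simpa using hi⟩
          · exact Or.inr hR
      · have hBle : B E R ≤ c.length := by
          rw [hclen]
          by_cases hR : R.Nonempty
          · have hRS : R ⊆ S := hRS'.trans Finset.sdiff_subset
            have hsup : R.sup (hgt E R) ≤ S.sup (hgt E S) := by
              refine Finset.sup_le fun v hv => ?_
              exact le_trans (hgt_mono hE hRS v) (Finset.le_sup (hRS hv))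
            simp only [B, hR, if_pos]
            omega
          · simp [B, hR]
        have hsub : c.toFinset ⊆ S := fun x hx => hcS x (List.mem_toFinset.1 hx)
        have hcardS : (S \ c.toFinset).card = S.card - c.length := by
          rw [Finset.card_sdiff_of_subset hsub, List.toFinset_card_of_nodup hcnd]
        have hlen_le : c.length ≤ S.card := by
          rw [← List.toFinset_card_of_nodup hcnd]
          exact Finset.card_le_card hsub
        have hmul : (ℓ + 1) * B E R = ℓ * B E R + B E R := by ring
        rw [hcardS] at hcard'
        rw [hmul]
        omega

/-- For every DAG `G` on `n` vertices and every integer `ℓ` with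
`1 ≤ ℓ ≤ n`, there exist `ℓ` chains `P_1, …, P_ℓ` of `G` and at most `⌈2n/ℓ⌉`
antichains `Q_1, …, Q_b` of `G` whose union covers all vertices of `G`. -/
theorem chain_antichain_decomposition :
    ∀ (n : ℕ) (E : Fin n → Fin n → Prop), Acyclic E →
      ∀ ℓ : ℕ, 1 ≤ ℓ → ℓ ≤ n →
      ∃ (P : Fin ℓ → List (Fin n)) (b : ℕ) (Q : Fin b → Finset (Fin n)),
        b ≤ (2 * n + ℓ - 1) / ℓ ∧
        (∀ i : Fin ℓ, (P i).Nodup ∧ List.Chain' E (P i)) ∧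
        (∀ j : Fin b, ∀ u ∈ Q j, ∀ v ∈ Q j, u ≠ v → ¬ E u v) ∧
        (∀ v : Fin n, (∃ i : Fin ℓ, v ∈ P i) ∨ (∃ j : Fin b, v ∈ Q j)) := by
  intro n E hE ℓ hℓ1 hℓn
  classical
  obtain ⟨P, R, hRS, hP, hcov, hcard⟩ := aux hE ℓ Finset.univ
  refine ⟨P, B E R, fun j => R.filter (fun v => hgt E R v = (j : ℕ)), ?_, hP, ?_, ?_⟩
  · have hn : ℓ * B E R ≤ n := by simpa using hcard
    have h1 : B E R ≤ n / ℓ := by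
      rw [Nat.le_div_iff_mul_le hℓ1, mul_comm]
      exact hn
    exact h1.trans (Nat.div_le_div_right (by omega))
  · intro j u hu v hv huv hEuv
    simp only [Finset.mem_filter] at hu hv
    have h1 : ES E R u v := ⟨hEuv, hu.1, hv.1⟩
    have h2 := hgt_lt hE h1
    omega
  · intro v
    rcases hcov v (Finset.mem_univ v) with ⟨i, hi⟩ | hR
    · exact Or.inl ⟨i, hi⟩
    · refine Or.inr ?_
      have hBR : R.Nonempty := ⟨v, hR⟩
      have hlt : hgt E R v < B E R := by
        simp only [B, hBR, if_pos]
        exact Nat.lt_succ_of_le (Finset.le_sup hR)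
      exact ⟨⟨hgt E R v, hlt⟩, Finset.mem_filter.2 ⟨hR, rfl⟩⟩

end Paper
end

section
/- Let G be a directed acyclic graph, let P = [a_1, …, a_k] be a chain of the transitive closure G* (so a_{i+1} is reachable from a_i in G for each i), let E_P = {(a_i, a_{i+1}) : 1 ≤ i < k}, and let H be a set of edges (a_i, a_j) with i < j such that dist_{E_P ∪ H}(a_i, a_j) ≤ 2 for all i < j. Then for every pair of vertices u, v, any directed u-v path having the minimum number of edges among all u-v paths in G ∪ E_P ∪ H contains at most 3 vertices from {a_1, …, a_k}. -/
/-!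
Every edge of `G ∪ E_P ∪ H` joins two vertices the second of which is reachable from the first
in the DAG `G`. So if a walk in `G ∪ E_P ∪ H` passes through `a_s` and later through `a_t`, then
`a_s = a_t` or `s < t`, and in both cases `a_s` and `a_t` are joined by a walk of at most two
edges of `E_P ∪ H`. On a shortest walk this forces the positions of any two chain vertices to
differ by at most two, so the chain vertices on it occupy at most three positions.
-/

namespace Paper

variable {V : Type*}

lemma IsWalk.append {E : V → V → Prop} :
    ∀ {l₁ : List V} {u v w : V} {l₂ : List V},
      IsWalk E u v l₁ → IsWalk E v w l₂ → IsWalk E u w (l₁ ++ l₂)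
  | [], _, _, _, _, h₁, h₂ => by cases h₁; exact h₂
  | _ :: _, _, _, _, _, h₁, h₂ => ⟨h₁.1, h₁.2.append h₂⟩

lemma IsWalk.mono {E F : V → V → Prop} (hEF : ∀ x y, E x y → F x y) :
    ∀ {l : List V} {u v : V}, IsWalk E u v l → IsWalk F u v l
  | [], _, _, h => h
  | _ :: _, _, _, h => ⟨hEF _ _ h.1, h.2.mono hEF⟩

lemma Reach.trans {E : V → V → Prop} {u v w : V}
    (h₁ : Reach E u v) (h₂ : Reach E v w) : Reach E u w :=
  let ⟨_, h₁⟩ := h₁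
  let ⟨_, h₂⟩ := h₂
  ⟨_, h₁.append h₂⟩

lemma Reach.of_forall_reach {E F : V → V → Prop} (hEF : ∀ x y, E x y → Reach F x y)
    {u v : V} (h : Reach E u v) : Reach F u v := by
  obtain ⟨l, hl⟩ := h
  induction l generalizing u with
  | nil => exact ⟨[], hl⟩
  | cons _ _ ih => exact (hEF _ _ hl.1).trans (ih hl.2)

lemma Acyclic.eq_of_reach_of_reach {E : V → V → Prop} (hE : Acyclic E) {x y : V}
    (hxy : Reach E x y) (hyx : Reach E y x) : x = y := by
  obtain ⟨l, hl⟩ := hxy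
  obtain ⟨m, hm⟩ := hyx
  cases l with
  | nil => exact hl
  | cons _ _ => simpa using hE x _ (hl.append hm)

lemma exists_isWalk_length_eq_dist {E : V → V → Prop} {u v : V} (h : Reach E u v) :
    ∃ l, IsWalk E u v l ∧ l.length = dist E u v :=
  let ⟨l, hl⟩ := h
  Nat.sInf_mem (s := {k | ∃ l, IsWalk E u v l ∧ l.length = k}) ⟨_, l, hl, rfl⟩

lemma reach_of_le_of_forall_reach_succ {E : V → V → Prop} {k : ℕ} {a : Fin k → V}
    (hstep : ∀ (i : Fin k) (h : (i : ℕ) + 1 < k), Reach E (a i) (a ⟨(i : ℕ) + 1, h⟩))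
    {i j : Fin k} (hij : i ≤ j) : Reach E (a i) (a j) := by
  obtain ⟨j, hj⟩ := j
  induction j with
  | zero => rw [show i = ⟨0, hj⟩ from Fin.ext (Nat.le_zero.mp hij)]; exact ⟨[], rfl⟩
  | succ j ih =>
    rcases (show (i : ℕ) ≤ j + 1 from hij).eq_or_lt with hij | hij
    · rw [show i = ⟨j + 1, hj⟩ from Fin.ext hij]; exact ⟨[], rfl⟩
    · exact (ih (by omega) (show (i : ℕ) ≤ j by omega)).trans (hstep ⟨j, by omega⟩ hj)

lemma Acyclic.exists_isWalk_length_le_of_reach {E F : V → V → Prop} (hE : Acyclic E)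
    {k d : ℕ} {a : Fin k → V} (hmono : ∀ {i j : Fin k}, i ≤ j → Reach E (a i) (a j))
    (hshort : ∀ i j : Fin k, i < j → ∃ w, IsWalk F (a i) (a j) w ∧ w.length ≤ d)
    {s t : Fin k} (hst : Reach E (a s) (a t)) :
    ∃ w, IsWalk F (a s) (a t) w ∧ w.length ≤ d := by
  rcases lt_or_ge s t with hlt | hge
  · exact hshort s t hlt
  · rw [hE.eq_of_reach_of_reach hst (hmono hge)]
    exact ⟨[], rfl, Nat.zero_le d⟩

lemma IsWalk.take_drop {E : V → V → Prop} :
    ∀ {p : List V} {u v : V}, IsWalk E u v p → ∀ (i : ℕ) (hi : i < (u :: p).length),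
      IsWalk E u (u :: p)[i] (p.take i) ∧ IsWalk E (u :: p)[i] v (p.drop i)
  | _, _, _, h, 0, _ => ⟨rfl, h⟩
  | _ :: _, _, _, h, i + 1, hi =>
    let ⟨h₁, h₂⟩ := h.2.take_drop i (by simpa using hi)
    ⟨⟨h.1, h₁⟩, h₂⟩

lemma IsWalk.reach_getElem {E : V → V → Prop} :
    ∀ {p : List V} {u v : V}, IsWalk E u v p →
      ∀ {i j : ℕ} (hij : i ≤ j) (hj : j < (u :: p).length), Reach E (u :: p)[i] (u :: p)[j]
  | _, _, _, h, 0, j, _, hj => ⟨_, (h.take_drop j hj).1⟩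
  | [], _, _, _, _ + 1, _, _, hj => by simp at hj; omega
  | _ :: _, _, _, _, _ + 1, 0, hij, _ => by omega
  | _ :: _, _, _, h, _ + 1, _ + 1, hij, hj => h.2.reach_getElem (by omega) (by simpa using hj)

lemma IsWalk.sub_le_length_of_isWalk {E : V → V → Prop} {p : List V} {u v : V}
    (h : IsWalk E u v p) (hmin : ∀ q, IsWalk E u v q → p.length ≤ q.length)
    {i j : ℕ} (hij : i ≤ j) (hj : j < (u :: p).length) {w : List V}
    (hw : IsWalk E (u :: p)[i] (u :: p)[j] w) : j - i ≤ w.length := by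
  have hsplice := hmin _ ((h.take_drop i (by omega)).1.append (hw.append (h.take_drop j hj).2))
  simp only [List.length_append, List.length_take, List.length_drop, List.length_cons] at hsplice hj
  omega

theorem _root_.List.card_filter_toFinset_le_of_sub_le {α : Type*} [DecidableEq α] (L : List α)
    (P : α → Prop) [DecidablePred P] (d : ℕ)
    (h : ∀ (i j : ℕ) (hi : i < L.length) (hj : j < L.length), i ≤ j → P L[i] → P L[j] →
      j - i ≤ d) :
    (L.toFinset.filter P).card ≤ d + 1 := by
  rcases (L.toFinset.filter P).eq_empty_or_nonempty with hS | hS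
  · simp [hS]
  obtain ⟨x₀, hx₀, hfirst⟩ := (L.toFinset.filter P).exists_min_image L.idxOf hS
  have hlt : ∀ {x}, x ∈ L.toFinset.filter P → L.idxOf x < L.length := fun hx =>
    List.idxOf_lt_length_iff.mpr (List.mem_toFinset.mp (Finset.mem_filter.mp hx).1)
  have hP : ∀ {x} (hx : x ∈ L.toFinset.filter P), P (L[L.idxOf x]'(hlt hx)) := fun hx => by
    rw [List.getElem_idxOf (hlt hx)]; exact (Finset.mem_filter.mp hx).2
  calc (L.toFinset.filter P).card
      ≤ (Finset.Icc (L.idxOf x₀) (L.idxOf x₀ + d)).card := by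
        refine Finset.card_le_card_of_injOn L.idxOf (fun x hx => ?_) (fun x hx y hy hxy => ?_)
        · have hgap := h _ _ (hlt hx₀) (hlt hx) (hfirst x hx) (hP hx₀) (hP hx)
          simp only [Finset.coe_Icc, Set.mem_Icc]
          exact ⟨hfirst x hx, by omega⟩
        · rw [← List.getElem_idxOf (hlt hx), ← List.getElem_idxOf (hlt hy)]
          simp only [hxy]
    _ = d + 1 := by simp only [Nat.card_Icc]; omega

theorem min_hop_path_meets_shortcut_chain_general (n k : ℕ) (E : Fin n → Fin n → Prop)
    (hacy : Acyclic E)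
    (a : Fin k → Fin n)
    (hchain : ∀ (i : Fin k) (h : (i : ℕ) + 1 < k), TC E (a i) (a ⟨(i : ℕ) + 1, h⟩))
    (EP : Fin n → Fin n → Prop)
    (hEP : EP = fun x y =>
      ∃ (i : Fin k) (h : (i : ℕ) + 1 < k), x = a i ∧ y = a ⟨(i : ℕ) + 1, h⟩)
    (H : Finset (Fin n × Fin n))
    (hH : ∀ e ∈ H, ∃ i j : Fin k, i < j ∧ e = (a i, a j))
    (hH2 : ∀ i j : Fin k, i < j →
      dist (fun x y => EP x y ∨ (x, y) ∈ H) (a i) (a j) ≤ 2)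
    (E' : Fin n → Fin n → Prop)
    (hE' : E' = fun x y => E x y ∨ EP x y ∨ (x, y) ∈ H)
    (u v : Fin n) (p : List (Fin n))
    (hwalk : IsWalk E' u v p)
    (hmin : ∀ q : List (Fin n), IsWalk E' u v q → p.length ≤ q.length) :
    ((u :: p).toFinset.filter (fun x => ∃ i : Fin k, a i = x)).card ≤ 3 := by
  have hchainE {i j : Fin k} (hij : i ≤ j) : Reach E (a i) (a j) :=
    reach_of_le_of_forall_reach_succ (fun i h => (hchain i h).2) hij
  have hedge (x y : Fin n) (hxy : E' x y) : Reach E x y := by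
    subst hE'
    rcases hxy with hxy | hxy | hxy
    · exact ⟨[y], hxy, rfl⟩
    · obtain ⟨i, h, rfl, rfl⟩ := hEP ▸ hxy
      exact (hchain i h).2
    · obtain ⟨i, j, hij, he⟩ := hH _ hxy
      obtain ⟨rfl, rfl⟩ := Prod.mk.inj he
      exact hchainE hij.le
  have hshort : ∀ s t : Fin k, Reach E (a s) (a t) →
      ∃ w, IsWalk E' (a s) (a t) w ∧ w.length ≤ 2 :=
    fun s t => hacy.exists_isWalk_length_le_of_reach hchainE fun i j hij => by
      have hEP_reach : Reach (fun x y => EP x y ∨ (x, y) ∈ H) (a i) (a j) :=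
        reach_of_le_of_forall_reach_succ (a := a)
          (fun i h => ⟨[_], Or.inl (by subst hEP; exact ⟨i, h, rfl, rfl⟩), rfl⟩) hij.le
      obtain ⟨w, hw, hlen⟩ := exists_isWalk_length_eq_dist hEP_reach
      exact ⟨w, hw.mono fun x y h => hE' ▸ Or.inr h, hlen ▸ hH2 i j hij⟩
  refine List.card_filter_toFinset_le_of_sub_le _ _ 2 fun i j _ hj hij ⟨s, hs⟩ ⟨t, ht⟩ => ?_
  obtain ⟨w, hw, hlen⟩ :=
    hshort s t (hs ▸ ht ▸ (hwalk.reach_getElem hij hj).of_forall_reach hedge)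
  rw [hs, ht] at hw
  exact (hwalk.sub_le_length_of_isWalk hmin hij hj hw).trans hlen

/-- Let `G` be a DAG, let `P = [a_1, …, a_k]` be a chain of the
transitive closure `G*`, let `E_P` be its set of consecutive edges, and let `H` be a
set of edges `(a_i, a_j)` with `i < j` such that `dist_{E_P ∪ H}(a_i, a_j) ≤ 2` for
all `i < j`. Then for all vertices `u, v`, any directed `u`-`v` path with the minimum
number of edges among all `u`-`v` paths in `G ∪ E_P ∪ H` contains at most `3` vertices
from `{a_1, …, a_k}`. -/
theorem min_hop_path_meets_shortcut_chain (n k : ℕ) (E : Fin n → Fin n → Prop)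
    (hacy : Acyclic E)
    (a : Fin k → Fin n) (hinj : Function.Injective a)
    (hchain : ∀ (i : Fin k) (h : (i : ℕ) + 1 < k), TC E (a i) (a ⟨(i : ℕ) + 1, h⟩))
    (EP : Fin n → Fin n → Prop)
    (hEP : EP = fun x y =>
      ∃ (i : Fin k) (h : (i : ℕ) + 1 < k), x = a i ∧ y = a ⟨(i : ℕ) + 1, h⟩)
    (H : Finset (Fin n × Fin n))
    (hH : ∀ e ∈ H, ∃ i j : Fin k, i < j ∧ e = (a i, a j))
    (hH2 : ∀ i j : Fin k, i < j →
      dist (fun x y => EP x y ∨ (x, y) ∈ H) (a i) (a j) ≤ 2)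
    (E' : Fin n → Fin n → Prop)
    (hE' : E' = fun x y => E x y ∨ EP x y ∨ (x, y) ∈ H)
    (u v : Fin n) (p : List (Fin n))
    (hwalk : IsWalk E' u v p)
    (hmin : ∀ q : List (Fin n), IsWalk E' u v q → p.length ≤ q.length) :
    ((u :: p).toFinset.filter (fun x => ∃ i : Fin k, a i = x)).card ≤ 3 :=
  min_hop_path_meets_shortcut_chain_general n k E hacy a hchain EP hEP H hH hH2 E' hE' u v p hwalk
    hmin

end Paper
end
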